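/- arXiv:1903.09239 — 4 statements merged into one kernel-verified Lean document; each statement's English description precedes it below -/
import Mathlib

section
/- For every hypothesis h ∈ H and every index j ∈ {1, …, n}, |ε_j(h) − (1/n) Σ_{i=1}^n ε_i(h)| ≤ 2( ε_j* + (1/n) Σ_{i=1}^n ε_i* ) + ε_j(h*) + β + (1/n) Σ_{i=1}^n ( d_H(D_i^X, D_j^X) + (1/2) d_{HΔH}(D_i^X, D_j^X) ), where β = Σ_{j=1}^n ε_j(h*) = min_{h∈H} Σ_{j=1}^n ε_j(h). -/
open MeasureTheory

/-- Risk of hypothesis `h` under a distribution `D` on `X × {0,1}`: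
`ε_D(h) = P_{(x,y)~D}(h(x) ≠ y)`. -/
noncomputable def risk {X : Type*} [MeasurableSpace X] (D : Measure (X × Bool)) (h : X → Bool) : ℝ :=
  (D {p | h p.1 ≠ p.2}).toReal

/-- Disagreement `E_{x~μ} |h(x) − h'(x)|` of two `{0,1}`-valued hypotheses under `μ`. -/
noncomputable def disag {X : Type*} [MeasurableSpace X] (μ : Measure X) (h h' : X → Bool) : ℝ :=
  (μ {x | h x ≠ h' x}).toReal

/-- `H`-divergence `d_H(μ, ν) = 2 sup_{h ∈ H} |P_μ(h = 1) − P_ν(h = 1)|`. -/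
noncomputable def Hdiv {X : Type*} [MeasurableSpace X] (H : Set (X → Bool)) (μ ν : Measure X) : ℝ :=
  2 * ⨆ h ∈ H, |(μ {x | h x = true}).toReal - (ν {x | h x = true}).toReal|

/-- Symmetric-difference divergence
`d_{HΔH}(μ, ν) = 2 sup_{h,h' ∈ H} |P_μ(h ≠ h') − P_ν(h ≠ h')|`. -/
noncomputable def HDHdiv {X : Type*} [MeasurableSpace X] (H : Set (X → Bool)) (μ ν : Measure X) : ℝ :=
  2 * ⨆ h ∈ H, ⨆ h' ∈ H, |(μ {x | h x ≠ h' x}).toReal - (ν {x | h x ≠ h' x}).toReal|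

/-- Marginal `D^X` on `X` of a distribution on `X × {0,1}`. -/
noncomputable def marg {X : Type*} [MeasurableSpace X] (D : Measure (X × Bool)) : Measure X :=
  D.map Prod.fst

/-!
Fix `h` and the joint minimiser `h*`. For every source `i`, the triangle inequality for the 0-1
loss gives `ε_j(h) ≤ ε_j(h*) + P_{D_j^X}(h ≠ h*)` and `P_{D_i^X}(h ≠ h*) ≤ ε_i(h) + ε_i(h*)`, and
since `h, h* ∈ H` the two disagreement probabilities differ by at most `½ d_{HΔH}(D_i^X, D_j^X)`.
With the symmetric inequalities this bounds `|ε_j(h) − ε_i(h)|`; averaging over `i` bounds the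
imbalance, and the remaining terms of the claimed bound are nonnegative slack.
-/

open Finset

lemma le_biSup_of_forall_le {ι : Type*} {s : Set ι} {f : ι → ℝ} {C : ℝ}
    (hf : ∀ i ∈ s, f i ≤ C) {i : ι} (hi : i ∈ s) : f i ≤ ⨆ i ∈ s, f i :=
  le_ciSup₂ (f := fun i (_ : i ∈ s) => f i)
    ⟨C, by rintro _ ⟨_, ⟨k, rfl⟩, ⟨hk, rfl⟩⟩; exact hf k hk⟩ i hi

lemma biSup_le_of_nonneg {ι : Type*} {s : Set ι} {f : ι → ℝ} {C : ℝ}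
    (hC : 0 ≤ C) (hf : ∀ i ∈ s, f i ≤ C) : ⨆ i ∈ s, f i ≤ C :=
  Real.iSup_le (fun i => Real.iSup_le (hf i) hC) hC

lemma abs_sub_mean_le {n : ℕ} {a b : Fin n → ℝ} {c : ℝ} (j : Fin n)
    (hab : ∀ i, |a j - a i| ≤ c + b i) :
    |a j - (1 / (n : ℝ)) * ∑ i, a i| ≤ c + (1 / (n : ℝ)) * ∑ i, b i := by
  have hn : (n : ℝ) ≠ 0 := Nat.cast_ne_zero.2 j.pos.ne'
  have mean_of_const (x : ℝ) (f : Fin n → ℝ) :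
      (1 / (n : ℝ)) * ∑ i, (x + f i) = x + (1 / (n : ℝ)) * ∑ i, f i := by
    rw [sum_add_distrib, sum_const, card_univ, Fintype.card_fin, nsmul_eq_mul]
    field_simp
  have hdiff : a j - (1 / (n : ℝ)) * ∑ i, a i = (1 / (n : ℝ)) * ∑ i, (a j + -a i) := by
    rw [mean_of_const, sum_neg_distrib]
    ring
  rw [hdiff, ← mean_of_const, abs_mul, abs_of_nonneg (by positivity)]
  gcongr
  exact (abs_sum_le_sum_abs _ _).trans
    (sum_le_sum fun i _ => by simpa only [← sub_eq_add_neg] using hab i)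

lemma measureReal_le_add_of_subset_union {α : Type*} [MeasurableSpace α] (μ : Measure α)
    [IsFiniteMeasure μ] {s t u : Set α} (hs : s ⊆ t ∪ u) :
    μ.real s ≤ μ.real t + μ.real u :=
  (measureReal_mono hs).trans (measureReal_union_le t u)

section Risk

variable {X : Type*} [MeasurableSpace X]

instance (D : Measure (X × Bool)) [IsProbabilityMeasure D] : IsProbabilityMeasure (marg D) :=
  Measure.isProbabilityMeasure_map measurable_fst.aemeasurable

lemma risk_nonneg (D : Measure (X × Bool)) (h : X → Bool) : 0 ≤ risk D h :=
  measureReal_nonneg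

lemma disag_marg (D : Measure (X × Bool)) {h h' : X → Bool}
    (mh : Measurable h) (mh' : Measurable h') :
    disag (marg D) h h' = D.real {p | h p.1 ≠ h' p.1} :=
  map_measureReal_apply measurable_fst (measurableSet_eq_fun mh mh').compl

lemma risk_le_risk_add_disag (D : Measure (X × Bool)) [IsFiniteMeasure D] {h h' : X → Bool}
    (mh : Measurable h) (mh' : Measurable h') :
    risk D h ≤ risk D h' + disag (marg D) h h' := by
  rw [disag_marg D mh mh']
  refine measureReal_le_add_of_subset_union D fun p (hp : h p.1 ≠ p.2) => ?_
  by_contra hq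
  simp only [Set.mem_union, Set.mem_ofPred_eq, not_or, not_not] at hq
  exact hp (hq.2.trans hq.1)

lemma disag_le_risk_add_risk (D : Measure (X × Bool)) [IsFiniteMeasure D] {h h' : X → Bool}
    (mh : Measurable h) (mh' : Measurable h') :
    disag (marg D) h h' ≤ risk D h + risk D h' := by
  rw [disag_marg D mh mh']
  refine measureReal_le_add_of_subset_union D fun p (hp : h p.1 ≠ h' p.1) => ?_
  by_contra hq
  simp only [Set.mem_union, Set.mem_ofPred_eq, not_or, not_not] at hq
  exact hp (hq.1.trans hq.2.symm)

lemma Hdiv_nonneg (H : Set (X → Bool)) (μ ν : Measure X) : 0 ≤ Hdiv H μ ν :=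
  mul_nonneg zero_le_two (Real.iSup_nonneg fun _ => Real.iSup_nonneg fun _ => abs_nonneg _)

lemma abs_disag_sub_disag_le_HDHdiv (H : Set (X → Bool)) (μ ν : Measure X)
    [IsProbabilityMeasure μ] [IsProbabilityMeasure ν] {h h' : X → Bool}
    (hh : h ∈ H) (hh' : h' ∈ H) :
    |disag μ h h' - disag ν h h'| ≤ (1 / 2) * HDHdiv H μ ν := by
  have bound (g g' : X → Bool) : |disag μ g g' - disag ν g g'| ≤ 1 :=
    abs_sub_le_of_nonneg_of_le measureReal_nonneg measureReal_le_one
      measureReal_nonneg measureReal_le_one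
  calc |disag μ h h' - disag ν h h'|
      ≤ ⨆ g' ∈ H, |disag μ h g' - disag ν h g'| :=
        le_biSup_of_forall_le (fun g' _ => bound h g') hh'
    _ ≤ ⨆ g ∈ H, ⨆ g' ∈ H, |disag μ g g' - disag ν g g'| :=
        le_biSup_of_forall_le
          (fun g _ => biSup_le_of_nonneg zero_le_one fun g' _ => bound g g') hh
    _ = (1 / 2) * HDHdiv H μ ν := by
        simp only [HDHdiv, disag]
        ring

lemma abs_risk_sub_risk_le (H : Set (X → Bool)) (D D' : Measure (X × Bool))
    [IsProbabilityMeasure D] [IsProbabilityMeasure D'] {h g : X → Bool}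
    (hh : h ∈ H) (hg : g ∈ H) (mh : Measurable h) (mg : Measurable g) :
    |risk D h - risk D' h| ≤
      risk D g + (risk D' g + (1 / 2) * HDHdiv H (marg D') (marg D)) := by
  have risk_le := risk_le_risk_add_disag D mh mg
  have disag_le := disag_le_risk_add_risk D mh mg
  have risk_le' := risk_le_risk_add_disag D' mh mg
  have disag_le' := disag_le_risk_add_risk D' mh mg
  obtain ⟨shift_le, shift_ge⟩ :=
    abs_sub_le_iff.1 (abs_disag_sub_disag_le_HDHdiv H (marg D') (marg D) hh hg)
  rw [abs_sub_le_iff]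
  constructor <;> linarith

end Risk

theorem classifier_imbalance_bound_HdH_general {X : Type*} [MeasurableSpace X]
    (H : Set (X → Bool)) (hHmeas : ∀ h ∈ H, Measurable h)
    (n : ℕ)
    (D : Fin n → Measure (X × Bool)) (hD : ∀ i, IsProbabilityMeasure (D i))
    (hstar : Fin n → (X → Bool))
    (hstarAll : X → Bool) (hstarAll_mem : hstarAll ∈ H)
    (h : X → Bool) (hh : h ∈ H) (j : Fin n) :
    |risk (D j) h - (1 / (n : ℝ)) * ∑ i, risk (D i) h| ≤
      2 * (risk (D j) (hstar j) + (1 / (n : ℝ)) * ∑ i, risk (D i) (hstar i)) +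
      risk (D j) hstarAll + (∑ k, risk (D k) hstarAll) +
      (1 / (n : ℝ)) * ∑ i, (Hdiv H (marg (D i)) (marg (D j)) +
        (1 / 2) * HDHdiv H (marg (D i)) (marg (D j))) := by
  have imbalance := abs_sub_mean_le (a := fun i => risk (D i) h) j fun i =>
    abs_risk_sub_risk_le H (D j) (D i) hh hstarAll_mem (hHmeas h hh)
      (hHmeas hstarAll hstarAll_mem)
  rw [sum_add_distrib, mul_add] at imbalance
  have hn : (1 : ℝ) ≤ n := Nat.one_le_cast.2 j.pos
  have mean_le_sum : (1 / (n : ℝ)) * ∑ i, risk (D i) hstarAll ≤ ∑ i, risk (D i) hstarAll :=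
    mul_le_of_le_one_left (sum_nonneg fun i _ => risk_nonneg _ _)
      ((div_le_one (by positivity)).2 hn)
  have HDH_le : (1 / (n : ℝ)) * ∑ i, (1 / 2) * HDHdiv H (marg (D i)) (marg (D j)) ≤
      (1 / (n : ℝ)) * ∑ i, (Hdiv H (marg (D i)) (marg (D j)) +
        (1 / 2) * HDHdiv H (marg (D i)) (marg (D j))) := by
    gcongr with i
    exact le_add_of_nonneg_left (Hdiv_nonneg _ _ _)
  have slack : 0 ≤ risk (D j) (hstar j) + (1 / (n : ℝ)) * ∑ i, risk (D i) (hstar i) :=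
    add_nonneg (risk_nonneg _ _)
      (mul_nonneg (by positivity) (sum_nonneg fun i _ => risk_nonneg (D i) (hstar i)))
  linarith

/-- Proposition 2: bound on the classifier imbalance using the `HΔH`-divergence. -/
theorem classifier_imbalance_bound_HdH {X : Type*} [MeasurableSpace X]
    (H : Set (X → Bool)) (hHne : H.Nonempty) (hHmeas : ∀ h ∈ H, Measurable h)
    (n : ℕ) (hn : 0 < n)
    (D : Fin n → Measure (X × Bool)) (hD : ∀ i, IsProbabilityMeasure (D i))
    (hstar : Fin n → (X → Bool)) (hstar_mem : ∀ i, hstar i ∈ H)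
    (hstar_min : ∀ i, ∀ g ∈ H, risk (D i) (hstar i) ≤ risk (D i) g)
    (hstarAll : X → Bool) (hstarAll_mem : hstarAll ∈ H)
    (hstarAll_min : ∀ g ∈ H, ∑ k, risk (D k) hstarAll ≤ ∑ k, risk (D k) g)
    (h : X → Bool) (hh : h ∈ H) (j : Fin n) :
    |risk (D j) h - (1 / (n : ℝ)) * ∑ i, risk (D i) h| ≤
      2 * (risk (D j) (hstar j) + (1 / (n : ℝ)) * ∑ i, risk (D i) (hstar i)) +
      risk (D j) hstarAll + (∑ k, risk (D k) hstarAll) +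
      (1 / (n : ℝ)) * ∑ i, (Hdiv H (marg (D i)) (marg (D j)) +
        (1 / 2) * HDHdiv H (marg (D i)) (marg (D j))) :=
  classifier_imbalance_bound_HdH_general H hHmeas n D hD hstar hstarAll hstarAll_mem h hh j
end

section
/- For every hypothesis h ∈ H, |ε_S(h) − ε_T(h)| ≤ 2(ε_T* + ε_S*) + β + (1/2) d_{HΔH}(D_S^X, D_T^X) + d_H(D_S^X, D_T^X), where β = min_{h∈H} ( ε_S(h) + ε_T(h) ). -/
open MeasureTheory

section Aux

variable {X : Type*} [MeasurableSpace X]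

lemma measNe {h g : X → Bool} (hh : Measurable h) (hg : Measurable g) :
    MeasurableSet {x | h x ≠ g x} := by
  have : {x | h x ≠ g x} =
      (h ⁻¹' {true} ∩ g ⁻¹' {false}) ∪ (h ⁻¹' {false} ∩ g ⁻¹' {true}) := by
    ext x
    simp only [Set.mem_setOf_eq, Set.mem_union, Set.mem_inter_iff, Set.mem_preimage,
      Set.mem_singleton_iff]
    cases hx : h x <;> cases hgx : g x <;> simp
  rw [this]
  exact ((hh (measurableSet_singleton _)).inter (hg (measurableSet_singleton _))).union
    ((hh (measurableSet_singleton _)).inter (hg (measurableSet_singleton _)))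

lemma risk_sub_le (D : Measure (X × Bool)) [IsProbabilityMeasure D] (h g : X → Bool) :
    risk D h ≤ risk D g + (D {p | h p.1 ≠ g p.1}).toReal := by
  have hsub : {p : X × Bool | h p.1 ≠ p.2} ⊆
      {p : X × Bool | g p.1 ≠ p.2} ∪ {p : X × Bool | h p.1 ≠ g p.1} := by
    intro p hp
    simp only [Set.mem_setOf_eq, Set.mem_union] at *
    by_cases hgp : g p.1 = p.2
    · right; rw [hgp]; exact hp
    · left; exact hgp
  have h1 : D {p : X × Bool | h p.1 ≠ p.2} ≤
      D {p : X × Bool | g p.1 ≠ p.2} + D {p : X × Bool | h p.1 ≠ g p.1} :=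
    le_trans (measure_mono hsub) (measure_union_le _ _)
  have h2 := ENNReal.toReal_mono (by
    exact ENNReal.add_ne_top.2 ⟨measure_ne_top D _, measure_ne_top D _⟩) h1
  rw [ENNReal.toReal_add (measure_ne_top D _) (measure_ne_top D _)] at h2
  exact h2

lemma disag_le_risks (D : Measure (X × Bool)) [IsProbabilityMeasure D] (h g : X → Bool) :
    (D {p | h p.1 ≠ g p.1}).toReal ≤ risk D h + risk D g := by
  have hsub : {p : X × Bool | h p.1 ≠ g p.1} ⊆
      {p : X × Bool | h p.1 ≠ p.2} ∪ {p : X × Bool | g p.1 ≠ p.2} := by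
    intro p hp
    simp only [Set.mem_setOf_eq, Set.mem_union] at *
    by_cases hhp : h p.1 = p.2
    · right; rw [← hhp]; exact fun e => hp e.symm
    · left; exact hhp
  have h1 : D {p : X × Bool | h p.1 ≠ g p.1} ≤
      D {p : X × Bool | h p.1 ≠ p.2} + D {p : X × Bool | g p.1 ≠ p.2} :=
    le_trans (measure_mono hsub) (measure_union_le _ _)
  have h2 := ENNReal.toReal_mono (by
    exact ENNReal.add_ne_top.2 ⟨measure_ne_top D _, measure_ne_top D _⟩) h1
  rw [ENNReal.toReal_add (measure_ne_top D _) (measure_ne_top D _)] at h2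
  exact h2

lemma marg_ne (D : Measure (X × Bool)) {h g : X → Bool}
    (hh : Measurable h) (hg : Measurable g) :
    (marg D) {x | h x ≠ g x} = D {p | h p.1 ≠ g p.1} := by
  rw [marg, Measure.map_apply measurable_fst (measNe hh hg)]
  rfl

end Aux

/-- Corollary 4: two-domain imbalance bound with the `HΔH`-divergence
`|ε_S(h) − ε_T(h)| ≤ 2(ε_T* + ε_S*) + β + (1/2) d_{HΔH}(D_S^X, D_T^X) + d_H(D_S^X, D_T^X)`. -/
theorem two_domain_imbalance_bound_HdH {X : Type*} [MeasurableSpace X]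
    (H : Set (X → Bool)) (hHne : H.Nonempty) (hHmeas : ∀ h ∈ H, Measurable h)
    (DS DT : Measure (X × Bool))
    (hDS : IsProbabilityMeasure DS) (hDT : IsProbabilityMeasure DT)
    (hS : X → Bool) (hS_mem : hS ∈ H) (hS_min : ∀ g ∈ H, risk DS hS ≤ risk DS g)
    (hT : X → Bool) (hT_mem : hT ∈ H) (hT_min : ∀ g ∈ H, risk DT hT ≤ risk DT g)
    (hstar : X → Bool) (hstar_mem : hstar ∈ H)
    (hstar_min : ∀ g ∈ H, risk DS hstar + risk DT hstar ≤ risk DS g + risk DT g)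
    (h : X → Bool) (hh : h ∈ H) :
    |risk DS h - risk DT h| ≤
      2 * (risk DT hT + risk DS hS) + (risk DS hstar + risk DT hstar) +
      (1 / 2) * HDHdiv H (marg DS) (marg DT) + Hdiv H (marg DS) (marg DT) := by
  set μ := marg DS
  set ν := marg DT
  set f : (X → Bool) → (X → Bool) → ℝ := fun a b =>
    |(μ {x | a x ≠ b x}).toReal - (ν {x | a x ≠ b x}).toReal| with hf
  -- marginals are probability measures
  have hμ : IsProbabilityMeasure μ := Measure.isProbabilityMeasure_map measurable_fst.aemeasurable
  have hν : IsProbabilityMeasure ν := Measure.isProbabilityMeasure_map measurable_fst.aemeasurable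
  have hμ1 : ∀ s : Set X, (μ s).toReal ≤ 1 := fun s => by
    have := prob_le_one (μ := μ) (s := s)
    simpa using ENNReal.toReal_mono (by simp) this
  have hν1 : ∀ s : Set X, (ν s).toReal ≤ 1 := fun s => by
    have := prob_le_one (μ := ν) (s := s)
    simpa using ENNReal.toReal_mono (by simp) this
  have hf1 : ∀ a b, f a b ≤ 1 := by
    intro a b
    rw [hf]
    have h1 := hμ1 {x | a x ≠ b x}
    have h2 := hν1 {x | a x ≠ b x}
    have h3 : (0:ℝ) ≤ (μ {x | a x ≠ b x}).toReal := ENNReal.toReal_nonneg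
    have h4 : (0:ℝ) ≤ (ν {x | a x ≠ b x}).toReal := ENNReal.toReal_nonneg
    rw [abs_sub_le_iff]
    constructor <;> linarith
  -- the iSup appearing in HDHdiv dominates f h hstar
  have hkey : f h hstar ≤ ⨆ a ∈ H, ⨆ b ∈ H, f a b := by
    have inner_le_one : ∀ a : X → Bool, (⨆ b ∈ H, f a b) ≤ 1 := by
      intro a
      exact Real.iSup_le (fun b => Real.iSup_le (fun _ => hf1 a b) zero_le_one) zero_le_one
    have step1 : f h hstar ≤ ⨆ b ∈ H, f h b := by
      refine le_ciSup_of_le ?_ hstar (ciSup_pos (f := fun _ : hstar ∈ H => f h hstar) hstar_mem).ge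
      refine ⟨1, ?_⟩
      rintro x ⟨b, rfl⟩
      exact Real.iSup_le (fun _ => hf1 h b) zero_le_one
    have step2 : (⨆ b ∈ H, f h b) ≤ ⨆ a ∈ H, ⨆ b ∈ H, f a b := by
      refine le_ciSup_of_le ?_ h (ciSup_pos (f := fun _ : h ∈ H => ⨆ b ∈ H, f h b) hh).ge
      refine ⟨1, ?_⟩
      rintro x ⟨a, rfl⟩
      exact Real.iSup_le (fun _ => inner_le_one a) zero_le_one
    exact step1.trans step2
  have hSdiv : (1/2) * HDHdiv H μ ν = ⨆ a ∈ H, ⨆ b ∈ H, f a b := by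
    rw [HDHdiv]; ring
  have hkey2 : f h hstar ≤ (1/2) * HDHdiv H μ ν := by rw [hSdiv]; exact hkey
  -- nonnegativity of the extra terms
  have hHdiv_nonneg : 0 ≤ Hdiv H μ ν := by
    rw [Hdiv]
    have : (0:ℝ) ≤ ⨆ a ∈ H, |(μ {x | a x = true}).toReal - (ν {x | a x = true}).toReal| :=
      Real.iSup_nonneg fun a => Real.iSup_nonneg fun _ => abs_nonneg _
    linarith
  have hrT : 0 ≤ risk DT hT := ENNReal.toReal_nonneg
  have hrS : 0 ≤ risk DS hS := ENNReal.toReal_nonneg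
  -- core estimates
  have hmS : Measurable h := hHmeas h hh
  have hmStar : Measurable hstar := hHmeas hstar hstar_mem
  have e1 : risk DS h ≤ risk DS hstar + (DS {p | h p.1 ≠ hstar p.1}).toReal :=
    risk_sub_le DS h hstar
  have e1' : risk DT h ≤ risk DT hstar + (DT {p | h p.1 ≠ hstar p.1}).toReal :=
    risk_sub_le DT h hstar
  have e2 : (DT {p | h p.1 ≠ hstar p.1}).toReal ≤ risk DT h + risk DT hstar :=
    disag_le_risks DT h hstar
  have e2' : (DS {p | h p.1 ≠ hstar p.1}).toReal ≤ risk DS h + risk DS hstar :=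
    disag_le_risks DS h hstar
  have hfval : f h hstar =
      |(DS {p | h p.1 ≠ hstar p.1}).toReal - (DT {p | h p.1 ≠ hstar p.1}).toReal| := by
    rw [hf]; simp only; rw [marg_ne DS hmS hmStar, marg_ne DT hmS hmStar]
  have habs1 : (DS {p | h p.1 ≠ hstar p.1}).toReal - (DT {p | h p.1 ≠ hstar p.1}).toReal
      ≤ f h hstar := by rw [hfval]; exact le_abs_self _
  have habs2 : (DT {p | h p.1 ≠ hstar p.1}).toReal - (DS {p | h p.1 ≠ hstar p.1}).toReal
      ≤ f h hstar := by rw [hfval]; exact neg_le_abs _ |>.trans' (by linarith [le_abs_self ((DS {p | h p.1 ≠ hstar p.1}).toReal - (DT {p | h p.1 ≠ hstar p.1}).toReal)])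
  rw [abs_sub_le_iff]
  constructor <;> linarith
end

section
/- For any weight vector α in the n-dimensional simplex, any hypothesis h ∈ H, and any index j ∈ {1, …, n}, the α-weighted risk ε_α(h) = Σ_{i=1}^n α_i ε_i(h) satisfies the tighter bound |ε_α(h) − ε_j(h)| ≤ Σ_{i=1}^n α_i ( β_ij + (1/2) d_{HΔH}(D_i^X, D_j^X) ), where β_ij = min_{h∈H} ( ε_i(h) + ε_j(h) ). -/
open MeasureTheory

lemma measNe_s7 {Y : Type*} [MeasurableSpace Y] {f g : Y → Bool}
    (hf : Measurable f) (hg : Measurable g) : MeasurableSet {y | f y ≠ g y} := by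
  have : {y | f y ≠ g y} = (f ⁻¹' {true} ∩ g ⁻¹' {false}) ∪ (f ⁻¹' {false} ∩ g ⁻¹' {true}) := by
    ext y; cases hy : f y <;> cases hy' : g y <;> simp [hy, hy']
  rw [this]
  exact ((hf (measurableSet_singleton _)).inter (hg (measurableSet_singleton _))).union
    ((hf (measurableSet_singleton _)).inter (hg (measurableSet_singleton _)))

lemma tri_toReal {Y : Type*} [MeasurableSpace Y] (μ : Measure Y) [IsFiniteMeasure μ]
    {A B C : Set Y} (hsub : A ⊆ B ∪ C) : (μ A).toReal ≤ (μ B).toReal + (μ C).toReal := by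
  have h1 : μ A ≤ μ B + μ C := (measure_mono hsub).trans (measure_union_le _ _)
  calc (μ A).toReal ≤ (μ B + μ C).toReal :=
        ENNReal.toReal_mono (ENNReal.add_ne_top.mpr ⟨measure_ne_top μ B, measure_ne_top μ C⟩) h1
    _ = (μ B).toReal + (μ C).toReal := ENNReal.toReal_add (measure_ne_top μ B) (measure_ne_top μ C)

lemma prob_toReal_le_one {Y : Type*} [MeasurableSpace Y] (μ : Measure Y)
    [IsProbabilityMeasure μ] (S : Set Y) : (μ S).toReal ≤ 1 := by
  have := ENNReal.toReal_mono (by simp) (prob_le_one (μ := μ) (s := S))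
  simpa using this

/-- Per-pair deviation bound: for any `h, g ∈ H`,
`|ε_μ(h) − ε_ν(h)| ≤ (ε_μ(g) + ε_ν(g)) + ½ d_{HΔH}(μ^X, ν^X)`. -/
lemma pair_bound {X : Type*} [MeasurableSpace X]
    (H : Set (X → Bool)) (hHmeas : ∀ h ∈ H, Measurable h)
    (μ ν : Measure (X × Bool)) [IsProbabilityMeasure μ] [IsProbabilityMeasure ν]
    (h g : X → Bool) (hh : h ∈ H) (hg : g ∈ H) :
    |risk μ h - risk ν h| ≤ (risk μ g + risk ν g) + (1 / 2) * HDHdiv H (marg μ) (marg ν) := by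
  have hm := hHmeas h hh
  have gm := hHmeas g hg
  set S : Set X := {x | h x ≠ g x} with hS
  have hSm : MeasurableSet S := measNe_s7 hm gm
  -- marginal formula
  have hmarg : ∀ (ρ : Measure (X × Bool)), (marg ρ) S = ρ {p | h p.1 ≠ g p.1} := by
    intro ρ
    rw [marg, Measure.map_apply measurable_fst hSm]
    rfl
  -- step B: disagreement transfer via the HΔH divergence
  have hB : |(μ {p | h p.1 ≠ g p.1}).toReal - (ν {p | h p.1 ≠ g p.1}).toReal| ≤
      (1 / 2) * HDHdiv H (marg μ) (marg ν) := by
    set F : (X → Bool) → (X → Bool) → ℝ := fun a b =>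
      |((marg μ) {x | a x ≠ b x}).toReal - ((marg ν) {x | a x ≠ b x}).toReal| with hF
    have hprobμ : IsProbabilityMeasure (marg μ) := Measure.isProbabilityMeasure_map measurable_fst.aemeasurable
    have hprobν : IsProbabilityMeasure (marg ν) := Measure.isProbabilityMeasure_map measurable_fst.aemeasurable
    have hF1 : ∀ a b, F a b ≤ 1 := by
      intro a b
      rw [hF]
      rw [abs_sub_le_iff]
      constructor
      · have := prob_toReal_le_one (marg μ) {x | a x ≠ b x}
        have h0 : (0:ℝ) ≤ ((marg ν) {x | a x ≠ b x}).toReal := ENNReal.toReal_nonneg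
        linarith
      · have := prob_toReal_le_one (marg ν) {x | a x ≠ b x}
        have h0 : (0:ℝ) ≤ ((marg μ) {x | a x ≠ b x}).toReal := ENNReal.toReal_nonneg
        linarith
    have hbdd_inner : ∀ a, BddAbove (Set.range fun b => ⨆ _ : b ∈ H, F a b) := by
      intro a
      refine ⟨1, ?_⟩
      rintro _ ⟨b, rfl⟩
      exact Real.iSup_le (fun _ => hF1 a b) zero_le_one
    have hbdd_outer : BddAbove (Set.range fun a => ⨆ _ : a ∈ H, ⨆ b ∈ H, F a b) := by
      refine ⟨1, ?_⟩
      rintro _ ⟨a, rfl⟩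
      refine Real.iSup_le (fun _ => ?_) zero_le_one
      refine Real.iSup_le (fun b => ?_) zero_le_one
      exact Real.iSup_le (fun _ => hF1 a b) zero_le_one
    have key : F h g ≤ ⨆ a ∈ H, ⨆ b ∈ H, F a b := by
      have h1 : F h g ≤ ⨆ b ∈ H, F h b := by
        have := le_ciSup (hbdd_inner h) g
        rwa [ciSup_pos hg] at this
      have h2 : (⨆ b ∈ H, F h b) ≤ ⨆ a ∈ H, ⨆ b ∈ H, F a b := by
        have := le_ciSup hbdd_outer h
        rwa [ciSup_pos hh] at this
      exact h1.trans h2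
    have : (1 / 2 : ℝ) * HDHdiv H (marg μ) (marg ν) = ⨆ a ∈ H, ⨆ b ∈ H, F a b := by
      rw [HDHdiv]; ring
    rw [← hmarg μ, ← hmarg ν]
    rw [this]
    exact key
  -- step A: risk triangle ε_ρ(h) ≤ ε_ρ(g) + P_ρ[h ≠ g]
  have hA : ∀ (ρ : Measure (X × Bool)), IsProbabilityMeasure ρ →
      risk ρ h ≤ risk ρ g + (ρ {p | h p.1 ≠ g p.1}).toReal := by
    intro ρ hρ
    apply tri_toReal
    intro p hp
    by_cases hgp : g p.1 = p.2
    · right; simp only [Set.mem_setOf_eq]; rw [hgp]; exact hp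
    · left; exact hgp
  -- step C: P_ρ[h ≠ g] ≤ ε_ρ(h) + ε_ρ(g)
  have hC : ∀ (ρ : Measure (X × Bool)), IsProbabilityMeasure ρ →
      (ρ {p | h p.1 ≠ g p.1}).toReal ≤ risk ρ h + risk ρ g := by
    intro ρ hρ
    apply tri_toReal
    intro p hp
    by_cases hhp : h p.1 = p.2
    · right; simp only [Set.mem_setOf_eq]; intro hgp; exact hp (hhp.trans hgp.symm)
    · left; exact hhp
  rw [abs_sub_le_iff]
  have hBμν := hB
  rw [abs_sub_le_iff] at hBμν
  obtain ⟨hB1, hB2⟩ := hBμν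
  constructor
  · have a1 := hA μ inferInstance
    have c1 := hC ν inferInstance
    linarith
  · have a1 := hA ν inferInstance
    have c1 := hC μ inferInstance
    linarith

/-- For `α` in the simplex, `|ε_α(h) − ε_j(h)| ≤ Σ_i α_i (β_ij + (1/2) d_{HΔH}(D_i^X, D_j^X))`. -/
theorem weighted_risk_deviation_bound_HdH {X : Type*} [MeasurableSpace X]
    (H : Set (X → Bool)) (hHne : H.Nonempty) (hHmeas : ∀ h ∈ H, Measurable h)
    (n : ℕ) (hn : 0 < n)
    (D : Fin n → Measure (X × Bool)) (hD : ∀ i, IsProbabilityMeasure (D i))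
    (hij : Fin n → Fin n → (X → Bool)) (hij_mem : ∀ i j, hij i j ∈ H)
    (hij_min : ∀ i j, ∀ g ∈ H,
      risk (D i) (hij i j) + risk (D j) (hij i j) ≤ risk (D i) g + risk (D j) g)
    (α : Fin n → ℝ) (hα : ∀ i, 0 ≤ α i) (hαsum : ∑ i, α i = 1)
    (h : X → Bool) (hh : h ∈ H) (j : Fin n) :
    |(∑ i, α i * risk (D i) h) - risk (D j) h| ≤
      ∑ i, α i * ((risk (D i) (hij i j) + risk (D j) (hij i j)) +
        (1 / 2) * HDHdiv H (marg (D i)) (marg (D j))) := by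
  have hrw : (∑ i, α i * risk (D i) h) - risk (D j) h
      = ∑ i, α i * (risk (D i) h - risk (D j) h) := by
    simp only [mul_sub]
    rw [Finset.sum_sub_distrib, ← Finset.sum_mul, hαsum, one_mul]
  rw [hrw]
  calc |∑ i, α i * (risk (D i) h - risk (D j) h)|
      ≤ ∑ i, |α i * (risk (D i) h - risk (D j) h)| := Finset.abs_sum_le_sum_abs _ _
    _ ≤ ∑ i, α i * ((risk (D i) (hij i j) + risk (D j) (hij i j)) +
        (1 / 2) * HDHdiv H (marg (D i)) (marg (D j))) := by
        apply Finset.sum_le_sum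
        intro i _
        rw [abs_mul, abs_of_nonneg (hα i)]
        apply mul_le_mul_of_nonneg_left _ (hα i)
        have := hD i; have := hD j
        exact pair_bound H hHmeas (D i) (D j) h (hij i j) hh (hij_mem i j)
end

section
/- For all indices i, j ∈ {1, …, n}, the disagreement between the oracle hypotheses of domains i and j on the i-th marginal satisfies E_{x~D_i^X} |h_i*(x) − h_j*(x)| ≤ ε_i(h*) + ε_j(h*) + ε_i* + ε_j* + (1/2) d_{HΔH}(D_i^X, D_j^X), where h* ∈ H is any minimizer over H of Σ_{j=1}^n ε_j(h). -/
open MeasureTheory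

/-! The oracle hypotheses of domains `i` and `j` are compared through the joint minimiser `h*`:
`d_i(h_i*, h_j*) ≤ d_i(h_i*, h*) + d_i(h*, h_j*)`. The first term is at most `ε_i(h_i*) + ε_i(h*)`,
since two hypotheses can only disagree at `x` if one of them errs on the label `y`. The second is
moved from `D_i^X` to `D_j^X` at the price `½ d_{HΔH}`, which bounds every change of a disagreement
probability between two members of `H`, and is then bounded by `ε_j(h*) + ε_j(h_j*)` in the same way. -/

/-- `0 ≤ C` is needed because `⨆ _ : a ∈ S, _` over `a ∉ S` is the junk value `0` in `ℝ`. -/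
lemma Real.le_biSup_biSup_of_le {α β : Type*} {S : Set α} {T : Set β} {F : α → β → ℝ} {C : ℝ}
    (hC : 0 ≤ C) (hF : ∀ a ∈ S, ∀ b ∈ T, F a b ≤ C) {a : α} (ha : a ∈ S) {b : β} (hb : b ∈ T) :
    F a b ≤ ⨆ a ∈ S, ⨆ b ∈ T, F a b := by
  have inner_le : ∀ a ∈ S, ⨆ b ∈ T, F a b ≤ C := fun a ha ↦
    Real.iSup_le (fun b ↦ Real.iSup_le (hF a ha b) hC) hC
  have inner_bdd : BddAbove (⋃ b, Set.range fun _ : b ∈ T ↦ F a b) := ⟨C, by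
    simp only [upperBounds, Set.mem_iUnion, Set.mem_range]
    rintro _ ⟨b, hb, rfl⟩
    exact hF a ha b hb⟩
  have outer_bdd : BddAbove (⋃ a, Set.range fun _ : a ∈ S ↦ ⨆ b ∈ T, F a b) := ⟨C, by
    simp only [upperBounds, Set.mem_iUnion, Set.mem_range]
    rintro _ ⟨a, ha, rfl⟩
    exact inner_le a ha⟩
  calc F a b ≤ ⨆ b ∈ T, F a b := le_ciSup₂ inner_bdd b hb
    _ ≤ ⨆ a ∈ S, ⨆ b ∈ T, F a b := le_ciSup₂ outer_bdd a ha

lemma measureReal_le_add_of_subset_union_s11 {Y : Type*} [MeasurableSpace Y] (μ : Measure Y)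
    [IsFiniteMeasure μ] {A B C : Set Y} (h : A ⊆ B ∪ C) : μ.real A ≤ μ.real B + μ.real C :=
  (measureReal_mono h).trans (measureReal_union_le B C)

instance {X : Type*} [MeasurableSpace X] (D : Measure (X × Bool)) [IsFiniteMeasure D] :
    IsFiniteMeasure (marg D) := by
  unfold marg
  infer_instance

section Disagreement

variable {X : Type*} [MeasurableSpace X]

lemma disag_triangle (μ : Measure X) [IsFiniteMeasure μ] (f g k : X → Bool) :
    disag μ f g ≤ disag μ f k + disag μ k g := by
  refine measureReal_le_add_of_subset_union_s11 μ fun x hfg ↦ ?_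
  by_cases hfk : f x = k x
  · exact Or.inr fun hkg ↦ hfg (hfk.trans hkg)
  · exact Or.inl hfk

lemma disag_marg_le_risk_add_risk (D : Measure (X × Bool)) [IsFiniteMeasure D] {f g : X → Bool}
    (hf : Measurable f) (hg : Measurable g) :
    disag (marg D) f g ≤ risk D f + risk D g := by
  have hmeas : MeasurableSet {x | f x ≠ g x} := (measurableSet_eq_fun hf hg).compl
  have hpull : disag (marg D) f g = D.real (Prod.fst ⁻¹' {x | f x ≠ g x}) := by
    rw [disag, marg, Measure.map_apply measurable_fst hmeas, measureReal_def]
  rw [hpull]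
  refine measureReal_le_add_of_subset_union_s11 D fun p hfg ↦ ?_
  by_cases hfp : f p.1 = p.2
  · exact Or.inr fun hgp ↦ hfg (hfp.trans hgp.symm)
  · exact Or.inl hfp

lemma disag_le_disag_add_half_HDHdiv {H : Set (X → Bool)} (μ ν : Measure X)
    [IsFiniteMeasure μ] [IsFiniteMeasure ν] {f g : X → Bool} (hf : f ∈ H) (hg : g ∈ H) :
    disag μ f g ≤ disag ν f g + (1 / 2) * HDHdiv H μ ν := by
  have hbound : ∀ h ∈ H, ∀ h' ∈ H, |μ.real {x | h x ≠ h' x} - ν.real {x | h x ≠ h' x}|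
      ≤ μ.real Set.univ + ν.real Set.univ := fun h _ h' _ ↦ by
    have := measureReal_mono (μ := μ) (Set.subset_univ {x | h x ≠ h' x})
    have := measureReal_mono (μ := ν) (Set.subset_univ {x | h x ≠ h' x})
    rw [abs_sub_le_iff]
    constructor <;> linarith [measureReal_nonneg (μ := μ) (s := {x | h x ≠ h' x}),
      measureReal_nonneg (μ := ν) (s := {x | h x ≠ h' x})]
  have hsup := Real.le_biSup_biSup_of_le (by positivity) hbound hf hg
  have hdiff := le_abs_self (μ.real {x | f x ≠ g x} - ν.real {x | f x ≠ g x})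
  simp only [measureReal_def] at hsup hdiff
  rw [disag, disag, HDHdiv]
  linarith

end Disagreement

theorem oracle_disagreement_bound_general {X : Type*} [MeasurableSpace X]
    (H : Set (X → Bool)) (hHmeas : ∀ h ∈ H, Measurable h)
    (n : ℕ)
    (D : Fin n → Measure (X × Bool)) (hD : ∀ i, IsProbabilityMeasure (D i))
    (hstar : Fin n → (X → Bool)) (hstar_mem : ∀ i, hstar i ∈ H)
    (hstarAll : X → Bool) (hstarAll_mem : hstarAll ∈ H)
    (i j : Fin n) :
    disag (marg (D i)) (hstar i) (hstar j) ≤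
      risk (D i) hstarAll + risk (D j) hstarAll +
      risk (D i) (hstar i) + risk (D j) (hstar j) +
      (1 / 2) * HDHdiv H (marg (D i)) (marg (D j)) := by
  have := hD i
  have := hD j
  have hi := hHmeas _ (hstar_mem i)
  have hj := hHmeas _ (hstar_mem j)
  have hAll := hHmeas _ hstarAll_mem
  calc disag (marg (D i)) (hstar i) (hstar j)
      ≤ disag (marg (D i)) (hstar i) hstarAll + disag (marg (D i)) hstarAll (hstar j) :=
        disag_triangle _ _ _ _
    _ ≤ (risk (D i) (hstar i) + risk (D i) hstarAll) +
          (disag (marg (D j)) hstarAll (hstar j) + (1 / 2) * HDHdiv H (marg (D i)) (marg (D j))) :=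
        add_le_add (disag_marg_le_risk_add_risk _ hi hAll)
          (disag_le_disag_add_half_HDHdiv _ _ hstarAll_mem (hstar_mem j))
    _ ≤ (risk (D i) (hstar i) + risk (D i) hstarAll) +
          ((risk (D j) hstarAll + risk (D j) (hstar j)) +
            (1 / 2) * HDHdiv H (marg (D i)) (marg (D j))) := by
        gcongr
        exact disag_marg_le_risk_add_risk _ hAll hj
    _ = _ := by ring

/-- `E_{x~D_i^X} |h_i*(x) − h_j*(x)| ≤ ε_i(h*) + ε_j(h*) + ε_i* + ε_j* + (1/2) d_{HΔH}(D_i^X, D_j^X)`. -/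
theorem oracle_disagreement_bound {X : Type*} [MeasurableSpace X]
    (H : Set (X → Bool)) (hHne : H.Nonempty) (hHmeas : ∀ h ∈ H, Measurable h)
    (n : ℕ) (hn : 0 < n)
    (D : Fin n → Measure (X × Bool)) (hD : ∀ i, IsProbabilityMeasure (D i))
    (hstar : Fin n → (X → Bool)) (hstar_mem : ∀ i, hstar i ∈ H)
    (hstar_min : ∀ i, ∀ g ∈ H, risk (D i) (hstar i) ≤ risk (D i) g)
    (hstarAll : X → Bool) (hstarAll_mem : hstarAll ∈ H)
    (hstarAll_min : ∀ g ∈ H, ∑ k, risk (D k) hstarAll ≤ ∑ k, risk (D k) g)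
    (i j : Fin n) :
    disag (marg (D i)) (hstar i) (hstar j) ≤
      risk (D i) hstarAll + risk (D j) hstarAll +
      risk (D i) (hstar i) + risk (D j) (hstar j) +
      (1 / 2) * HDHdiv H (marg (D i)) (marg (D j)) :=
  oracle_disagreement_bound_general H hHmeas n D hD hstar hstar_mem hstarAll hstarAll_mem i j
end
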